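/- Let A = K[x,y,z]/⟨x^5, y^5, z^5, x^2yz, xy^2z⟩ over a field K of characteristic 0. Then the Hilbert function of A is (1, 3, 6, 10, 13, 13, 10, 6, 3), and for every linear form ℓ the multiplication map A_4 → A_5 is not bijective; hence A fails the Weak Lefschetz Property. -/

import Mathlib

/-!
`A` is a quotient by a monomial ideal, so in each degree the residues of the standard monomials
(those divisible by no generator) form a basis, and the Hilbert function counts exponent triples.
For `ℓ = a x + b y + c z` there is an explicit quartic `F` with `ℓ F ∈ I` whose coefficients of
`x⁴, y⁴, z⁴` are `a⁴, b⁴, c⁴`. So `ℓ` kills a nonzero element of `A₄` (for `ℓ = 0` take `x⁴`),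
and multiplication `A₄ → A₅` is not injective.
-/
open MvPolynomial

/-- The degree-`m` piece of the graded quotient. -/
noncomputable def gradedPiece {K : Type*} [Field K] {σ : Type*}
    (I : Ideal (MvPolynomial σ K)) (m : ℕ) :
    Submodule K (MvPolynomial σ K ⧸ I) :=
  (MvPolynomial.homogeneousSubmodule σ K m).map (Ideal.Quotient.mkₐ K I).toLinearMap

section MonomialIdeal

variable (K : Type*) {σ : Type*} [Field K]

noncomputable def monomialIdeal (G : Set (σ →₀ ℕ)) : Ideal (MvPolynomial σ K) :=
  Ideal.span ((monomial · 1) '' G)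

variable {K} {G : Set (σ →₀ ℕ)}

theorem monomial_mem_monomialIdeal {d g : σ →₀ ℕ} (hg : g ∈ G) (hgd : g ≤ d) :
    monomial d (1 : K) ∈ monomialIdeal K G := by
  classical
  rw [monomialIdeal, mem_ideal_span_monomial_image]
  intro d' hd'
  rw [support_monomial, if_neg one_ne_zero, Finset.mem_singleton] at hd'
  exact ⟨g, hg, hd' ▸ hgd⟩

theorem mk_ne_zero_of_coeff_ne_zero {p : MvPolynomial σ K} {d : σ →₀ ℕ}
    (hd : coeff d p ≠ 0) (hstd : ∀ g ∈ G, ¬ g ≤ d) :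
    Ideal.Quotient.mk (monomialIdeal K G) p ≠ 0 := by
  rw [Ne, Ideal.Quotient.eq_zero_iff_mem, monomialIdeal, mem_ideal_span_monomial_image]
  intro hp
  obtain ⟨g, hg, hgd⟩ := hp d (mem_support_iff.mpr hd)
  exact hstd g hg hgd

theorem mk_mem_gradedPiece {I : Ideal (MvPolynomial σ K)} {p : MvPolynomial σ K} {m : ℕ}
    (hp : p.IsHomogeneous m) : Ideal.Quotient.mk I p ∈ gradedPiece I m :=
  Submodule.mem_map_of_mem (f := (Ideal.Quotient.mkₐ K I).toLinearMap) hp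

theorem linearIndependent_mk_monomial :
    LinearIndependent K fun d : {d : σ →₀ ℕ // ∀ g ∈ G, ¬ g ≤ d} =>
      Ideal.Quotient.mkₐ K (monomialIdeal K G) (monomial d.1 1) := by
  have hmonomial : LinearIndependent K fun d : {d : σ →₀ ℕ // ∀ g ∈ G, ¬ g ≤ d} =>
      monomial d.1 (1 : K) := by
    rw [← Function.comp_def (monomial · 1), ← coe_basisMonomials]
    exact (basisMonomials σ K).linearIndependent.comp _ Subtype.val_injective
  refine hmonomial.map (f := (Ideal.Quotient.mkₐ K (monomialIdeal K G)).toLinearMap) ?_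
  rw [Submodule.disjoint_def]
  intro p hp hker
  have hstd : p ∈ restrictSupport K {d | ∀ g ∈ G, ¬ g ≤ d} := Submodule.span_le.mpr
    (by rintro _ ⟨d, rfl⟩; exact (monomial_mem_restrictSupport K).mpr (Or.inl d.2)) hp
  by_contra hne
  obtain ⟨d, hd⟩ := support_nonempty.mpr hne
  exact mk_ne_zero_of_coeff_ne_zero (mem_support_iff.mp hd)
    ((mem_restrictSupport_iff K).mp hstd hd) hker

variable (G) in
theorem gradedPiece_monomialIdeal_eq_span (m : ℕ) (S : Finset (σ →₀ ℕ))
    (hS : ∀ d, d ∈ S ↔ d.degree = m ∧ ∀ g ∈ G, ¬ g ≤ d) :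
    gradedPiece (monomialIdeal K G) m =
      Submodule.span K (Set.range fun d : S => Ideal.Quotient.mkₐ K _ (monomial d.1 1)) := by
  have hhom : homogeneousSubmodule σ K m = restrictSupport K {d | d.degree = m} :=
    homogeneousSubmodule_eq_finsupp_supported σ K m
  rw [gradedPiece, hhom, restrictSupport_eq_span, Submodule.map_span, Set.image_image]
  apply le_antisymm
  · rw [Submodule.span_le]
    rintro _ ⟨d, hdeg, rfl⟩
    by_cases hstd : ∀ g ∈ G, ¬ g ≤ d
    · exact Submodule.subset_span ⟨⟨d, (hS d).2 ⟨hdeg, hstd⟩⟩, rfl⟩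
    · push Not at hstd
      obtain ⟨g, hg, hgd⟩ := hstd
      simp [Ideal.Quotient.eq_zero_iff_mem.mpr (monomial_mem_monomialIdeal hg hgd)]
  · refine Submodule.span_mono ?_
    rintro _ ⟨d, rfl⟩
    exact ⟨d.1, ((hS d).1 d.2).1, rfl⟩

variable (G) in
theorem finrank_gradedPiece_monomialIdeal (m : ℕ) (S : Finset (σ →₀ ℕ))
    (hS : ∀ d, d ∈ S ↔ d.degree = m ∧ ∀ g ∈ G, ¬ g ≤ d) :
    Module.finrank K (gradedPiece (monomialIdeal K G) m) = S.card := by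
  rw [gradedPiece_monomialIdeal_eq_span G m S hS, finrank_span_eq_card, Fintype.card_coe]
  exact linearIndependent_mk_monomial.comp (fun d : S => ⟨d.1, ((hS d).1 d.2).2⟩)
    fun _ _ h => Subtype.ext (Subtype.mk.inj h)

end MonomialIdeal

namespace NonLefschetzExample

noncomputable def exponentIso : ℕ × ℕ × ℕ ≃o (Fin 3 →₀ ℕ) where
  toFun p := Finsupp.equivFunOnFinite.symm ![p.1, p.2.1, p.2.2]
  invFun d := (d 0, d 1, d 2)
  left_inv p := by simp
  right_inv d := by ext i; fin_cases i <;> simp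
  map_rel_iff' {p q} := by
    simp [Finsupp.le_def, Fin.forall_fin_succ, Prod.le_def]

theorem degree_exponentIso (p : ℕ × ℕ × ℕ) :
    (exponentIso p).degree = p.1 + p.2.1 + p.2.2 := by
  simp [exponentIso, Finsupp.degree_eq_sum, Fin.sum_univ_three, add_assoc]

theorem monomial_exponentIso {R : Type*} [CommSemiring R] (p : ℕ × ℕ × ℕ) (r : R) :
    monomial (exponentIso p) r = C r * (X 0 ^ p.1 * X 1 ^ p.2.1 * X 2 ^ p.2.2) := by
  simp only [exponentIso, RelIso.coe_fn_mk, Equiv.coe_fn_mk, X_pow_eq_monomial, monomial_mul,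
    mul_one, C_mul_monomial]
  congr 2
  ext i
  fin_cases i <;> simp

def generatorExponents : Finset (ℕ × ℕ × ℕ) :=
  {(5, 0, 0), (0, 5, 0), (0, 0, 5), (2, 1, 1), (1, 2, 1)}

def standardExponents (m : ℕ) : Finset (ℕ × ℕ × ℕ) :=
  (Finset.range 5 ×ˢ Finset.range 5 ×ˢ Finset.range 5).filter
    fun p => p.1 + p.2.1 + p.2.2 = m ∧ ∀ g ∈ generatorExponents, ¬ g ≤ p

variable {K : Type*} [Field K]

theorem span_eq_monomialIdeal :
    Ideal.span {X 0 ^ 5, X 1 ^ 5, X 2 ^ 5, X 0 ^ 2 * X 1 * X 2, X 0 * X 1 ^ 2 * X 2} =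
      monomialIdeal K (exponentIso '' generatorExponents) := by
  simp [monomialIdeal, generatorExponents, Set.image_insert_eq, monomial_exponentIso]

theorem finrank_gradedPiece (m : ℕ) :
    Module.finrank K (gradedPiece (monomialIdeal K (exponentIso '' generatorExponents)) m) =
      (standardExponents m).card := by
  rw [finrank_gradedPiece_monomialIdeal _ m
    ((standardExponents m).map exponentIso.toEquiv.toEmbedding), Finset.card_map]
  intro d
  obtain ⟨p, rfl⟩ := exponentIso.surjective d
  simp only [Set.forall_mem_image, OrderIso.le_iff_le]
  simp [standardExponents, generatorExponents, degree_exponentIso, Prod.le_def]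
  omega

theorem standardExponents_eq_empty {m : ℕ} (hm : 9 ≤ m) : standardExponents m = ∅ := by
  ext p
  simp [standardExponents, generatorExponents, Prod.le_def]
  omega

theorem forall_not_le_of_mem_standardExponents {m : ℕ} {p : ℕ × ℕ × ℕ}
    (hp : p ∈ standardExponents m) :
    ∀ g ∈ exponentIso '' generatorExponents, ¬ g ≤ exponentIso p := by
  rintro _ ⟨g, hg, rfl⟩
  rw [OrderIso.le_iff_le]
  exact (Finset.mem_filter.mp hp).2.2 g hg

noncomputable def annihilatingQuartic (a b c : K) : MvPolynomial (Fin 3) K :=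
  monomial (exponentIso (4, 0, 0)) (a ^ 4) + monomial (exponentIso (3, 1, 0)) (-(a ^ 3 * b))
    + monomial (exponentIso (3, 0, 1)) (-(a ^ 3 * c))
    + monomial (exponentIso (2, 2, 0)) (a ^ 2 * b ^ 2)
    + monomial (exponentIso (2, 0, 2)) (a ^ 2 * c ^ 2)
    + monomial (exponentIso (1, 3, 0)) (-(a * b ^ 3))
    + monomial (exponentIso (1, 1, 2)) (2 * a * b * c ^ 2)
    + monomial (exponentIso (1, 0, 3)) (-(a * c ^ 3))
    + monomial (exponentIso (0, 4, 0)) (b ^ 4)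
    + monomial (exponentIso (0, 3, 1)) (-(b ^ 3 * c))
    + monomial (exponentIso (0, 2, 2)) (b ^ 2 * c ^ 2)
    + monomial (exponentIso (0, 1, 3)) (-(b * c ^ 3))
    + monomial (exponentIso (0, 0, 4)) (c ^ 4)

theorem isHomogeneous_annihilatingQuartic (a b c : K) :
    (annihilatingQuartic a b c).IsHomogeneous 4 := by
  unfold annihilatingQuartic
  repeat' first
    | exact isHomogeneous_monomial _ (degree_exponentIso _)
    | apply IsHomogeneous.add

theorem mul_annihilatingQuartic_mem (a b c : K) :
    (a • X 0 + b • X 1 + c • X 2) * annihilatingQuartic a b c ∈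
      monomialIdeal K (exponentIso '' generatorExponents) := by
  have key : (a • X 0 + b • X 1 + c • X 2) * annihilatingQuartic a b c =
      C (a ^ 5) * X 0 ^ 5 + C (b ^ 5) * X 1 ^ 5 + C (c ^ 5) * X 2 ^ 5
        + (C (3 * a ^ 2 * b * c ^ 2) * X 2 - C (2 * a ^ 3 * b * c) * X 0) * (X 0 ^ 2 * X 1 * X 2)
        + (C (a ^ 2 * b ^ 2 * c) * X 0 - C (2 * a * b ^ 3 * c) * X 1
            + C (3 * a * b ^ 2 * c ^ 2) * X 2) * (X 0 * X 1 ^ 2 * X 2) := by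
    simp only [annihilatingQuartic, monomial_exponentIso, smul_eq_C_mul, map_mul, map_pow,
      map_neg, map_ofNat]
    ring
  rw [key, ← span_eq_monomialIdeal]
  refine add_mem (add_mem (add_mem (add_mem ?_ ?_) ?_) ?_) ?_ <;>
    exact Ideal.mul_mem_left _ _ (Ideal.subset_span (by simp))

theorem mk_annihilatingQuartic_ne_zero {a b c : K} (h : a ≠ 0 ∨ b ≠ 0 ∨ c ≠ 0) :
    Ideal.Quotient.mk (monomialIdeal K (exponentIso '' generatorExponents))
      (annihilatingQuartic a b c) ≠ 0 := by
  rcases h with h | h | h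
  · exact mk_ne_zero_of_coeff_ne_zero (d := exponentIso (4, 0, 0))
      (by simp [annihilatingQuartic, coeff_monomial, h])
      (forall_not_le_of_mem_standardExponents (m := 4) (by decide))
  · exact mk_ne_zero_of_coeff_ne_zero (d := exponentIso (0, 4, 0))
      (by simp [annihilatingQuartic, coeff_monomial, h])
      (forall_not_le_of_mem_standardExponents (m := 4) (by decide))
  · exact mk_ne_zero_of_coeff_ne_zero (d := exponentIso (0, 0, 4))
      (by simp [annihilatingQuartic, coeff_monomial, h])
      (forall_not_le_of_mem_standardExponents (m := 4) (by decide))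

theorem exists_ne_zero_mul_eq_zero {ℓ : MvPolynomial (Fin 3) K} (hℓ : ℓ.IsHomogeneous 1) :
    ∃ x ∈ gradedPiece (monomialIdeal K (exponentIso '' generatorExponents)) 4,
      Ideal.Quotient.mk _ ℓ * x = 0 ∧ x ≠ 0 := by
  have hspan : ℓ ∈ Submodule.span K (Set.range X) := by
    rwa [← homogeneousSubmodule_one_eq_span_X]
  obtain ⟨c, rfl⟩ := (Submodule.mem_span_range_iff_exists_fun K).mp hspan
  rw [Fin.sum_univ_three]
  by_cases hc : c 0 = 0 ∧ c 1 = 0 ∧ c 2 = 0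
  · obtain ⟨h0, h1, h2⟩ := hc
    exact ⟨_, mk_mem_gradedPiece (isHomogeneous_annihilatingQuartic 1 0 0),
      by simp [h0, h1, h2], mk_annihilatingQuartic_ne_zero (Or.inl one_ne_zero)⟩
  · refine ⟨_, mk_mem_gradedPiece (isHomogeneous_annihilatingQuartic (c 0) (c 1) (c 2)), ?_,
      mk_annihilatingQuartic_ne_zero (by tauto)⟩
    rw [← map_mul, Ideal.Quotient.eq_zero_iff_mem]
    exact mul_annihilatingQuartic_mem (c 0) (c 1) (c 2)

end NonLefschetzExample

open NonLefschetzExample in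
theorem stmt13_general {K : Type*} [Field K]
    (I : Ideal (MvPolynomial (Fin 3) K))
    (hI : I = Ideal.span {X 0 ^ 5, X 1 ^ 5, X 2 ^ 5,
      X 0 ^ 2 * X 1 * X 2, X 0 * X 1 ^ 2 * X 2}) :
    (Module.finrank K (gradedPiece I 0) = 1 ∧
     Module.finrank K (gradedPiece I 1) = 3 ∧
     Module.finrank K (gradedPiece I 2) = 6 ∧
     Module.finrank K (gradedPiece I 3) = 10 ∧
     Module.finrank K (gradedPiece I 4) = 13 ∧
     Module.finrank K (gradedPiece I 5) = 13 ∧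
     Module.finrank K (gradedPiece I 6) = 10 ∧
     Module.finrank K (gradedPiece I 7) = 6 ∧
     Module.finrank K (gradedPiece I 8) = 3 ∧
     ∀ m : ℕ, 9 ≤ m → Module.finrank K (gradedPiece I m) = 0) ∧
    ∀ ℓ : MvPolynomial (Fin 3) K, ℓ.IsHomogeneous 1 →
      ¬ ((∀ x ∈ gradedPiece I 4, Ideal.Quotient.mk I ℓ * x = 0 → x = 0) ∧
         (∀ y ∈ gradedPiece I 5,
           ∃ x ∈ gradedPiece I 4, Ideal.Quotient.mk I ℓ * x = y)) := by
  subst hI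
  rw [span_eq_monomialIdeal]
  simp only [finrank_gradedPiece]
  refine ⟨⟨by decide, by decide, by decide, by decide, by decide, by decide, by decide,
    by decide, by decide, fun m hm => by rw [standardExponents_eq_empty hm, Finset.card_empty]⟩,
    fun ℓ hℓ ⟨hinj, _⟩ => ?_⟩
  obtain ⟨x, hx, hℓx, hx0⟩ := exists_ne_zero_mul_eq_zero hℓ
  exact hx0 (hinj x hx hℓx)

/-- Example 2.5: `A = K[x,y,z]/⟨x⁵,y⁵,z⁵,x²yz,xy²z⟩` has Hilbert function
`(1,3,6,10,13,13,10,6,3)`, and for every linear form `ℓ` the multiplication map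
`A₄ → A₅` is not bijective; hence `A` fails the Weak Lefschetz Property. -/
theorem stmt13 {K : Type*} [Field K] [CharZero K]
    (I : Ideal (MvPolynomial (Fin 3) K))
    (hI : I = Ideal.span {X 0 ^ 5, X 1 ^ 5, X 2 ^ 5,
      X 0 ^ 2 * X 1 * X 2, X 0 * X 1 ^ 2 * X 2}) :
    (Module.finrank K (gradedPiece I 0) = 1 ∧
     Module.finrank K (gradedPiece I 1) = 3 ∧
     Module.finrank K (gradedPiece I 2) = 6 ∧
     Module.finrank K (gradedPiece I 3) = 10 ∧
     Module.finrank K (gradedPiece I 4) = 13 ∧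
     Module.finrank K (gradedPiece I 5) = 13 ∧
     Module.finrank K (gradedPiece I 6) = 10 ∧
     Module.finrank K (gradedPiece I 7) = 6 ∧
     Module.finrank K (gradedPiece I 8) = 3 ∧
     ∀ m : ℕ, 9 ≤ m → Module.finrank K (gradedPiece I m) = 0) ∧
    ∀ ℓ : MvPolynomial (Fin 3) K, ℓ.IsHomogeneous 1 →
      ¬ ((∀ x ∈ gradedPiece I 4, Ideal.Quotient.mk I ℓ * x = 0 → x = 0) ∧
         (∀ y ∈ gradedPiece I 5,
           ∃ x ∈ gradedPiece I 4, Ideal.Quotient.mk I ℓ * x = y)) :=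
  stmt13_general I hI
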